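/- arXiv:2007.09519 — 3 statements merged into one kernel-verified Lean document; each statement's English description precedes it below -/
import Mathlib

section
/- If β_n ≤ γ, then for every τ ∈ 𝒯 one has R^{[0,T]}(∞) ≤ R^τ(∞); that is, the interval [0, T] minimizes R^τ(∞) over 𝒯. -/
open Set Filter MeasureTheory Topology Asymptotics
open scoped Classical

noncomputable section

/-- The transmission rate: `βq` on the quarantine set `τ`, `βn` elsewhere. -/
def betaFun (βq βn : ℝ) (τ : Set ℝ) : ℝ → ℝ := fun t => if t ∈ τ then βq else βn

/-- `(S, I)` solves the SIR system `S' = -β S I`, `I' = β S I - γ I` on `[0, ∞)`,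
in integrated form. -/
def IsSIR (β : ℝ → ℝ) (γ : ℝ) (S I : ℝ → ℝ) : Prop :=
  ContinuousOn S (Ici 0) ∧ ContinuousOn I (Ici 0) ∧
    ∀ t ∈ Ici (0 : ℝ),
      (S t = S 0 - ∫ s in (0 : ℝ)..t, β s * S s * I s) ∧
      (I t = I 0 + ∫ s in (0 : ℝ)..t, (β s * S s * I s - γ * I s))

/-- `(S, I, R)` solves the full SIR system `S' = -β S I`, `I' = β S I - γ I`,
`R' = γ I` on `[0, ∞)`, in integrated form. -/
def IsSIRFull (β : ℝ → ℝ) (γ : ℝ) (S I R : ℝ → ℝ) : Prop :=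
  IsSIR β γ S I ∧ ∀ t ∈ Ici (0 : ℝ), R t = R 0 + ∫ s in (0 : ℝ)..t, γ * I s

/-- `τ` belongs to the class `𝒯`: a finite union of closed intervals contained in
`[0, ∞)` with total length `T`. -/
def MemTau (T : ℝ) (τ : Set ℝ) : Prop :=
  τ ⊆ Ici 0 ∧
    (∃ (n : ℕ) (a b : Fin n → ℝ), (∀ i, a i ≤ b i) ∧ τ = ⋃ i, Icc (a i) (b i)) ∧
    volume τ = ENNReal.ofReal T


/-!
Write `q(t) = ∫₀ᵗ 𝟙_τ I` for the infections that fall in quarantine, `w(t) = |τ ∩ [0, t]|` for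
the quarantine time used, and `G(u) = 1 - (1 - I₀) e^{-βq u} - γ u`. From `S = (1 - I₀) e^{-∫ β I}`
and `S + I + R = 1`, the hypothesis `βn ≤ γ` gives `I ≤ G(q)` for every `τ`, with equality on
`[0, T]` when `τ = [0, T]`. Separating variables with `Φ(u) = ∫₀ᵘ dv / G(v)` turns this into
`Φ(q_τ(t)) ≤ w(t) ≤ T = Φ(q_{[0,T]}(T))`: quarantining at once accumulates the largest final
quarantined load. The final size `R(∞)` is tied to the final load `q(∞)` by
`R(∞) = 1 - (1 - I₀) exp(-(βn R(∞) / γ - (βn - βq) q(∞)))`, and for `βn ≤ γ` this makes `R(∞)`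
decrease as `q(∞)` grows.
-/

theorem Real.exp_neg_sub_exp_neg_le {a b : ℝ} (ha : 0 ≤ a) (hab : a ≤ b) :
    Real.exp (-a) - Real.exp (-b) ≤ b - a := by
  have h := Real.one_sub_le_exp_neg (b - a)
  have hexp : Real.exp (-b) = Real.exp (-a) * Real.exp (-(b - a)) := by
    rw [← Real.exp_add]; ring_nf
  have : Real.exp (-a) ≤ 1 := Real.exp_le_one_iff.mpr (by linarith)
  nlinarith [Real.exp_pos (-a)]

theorem frontier_iUnion_subset_of_finite {X ι : Type*} [TopologicalSpace X] [Finite ι]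
    (s : ι → Set X) : frontier (⋃ i, s i) ⊆ ⋃ i, frontier (s i) := by
  rintro x ⟨hcl, hint⟩
  rw [closure_iUnion_of_finite, mem_iUnion] at hcl
  obtain ⟨i, hi⟩ := hcl
  refine mem_iUnion.mpr ⟨i, hi, fun hx => hint ?_⟩
  exact interior_mono (subset_iUnion s i) hx

theorem hasDerivAt_integral_of_continuousOn {f : ℝ → ℝ} {U : Set ℝ} {a u : ℝ} (hU : IsOpen U)
    (hf : ContinuousOn f U) (hu : u ∈ U) (hint : IntervalIntegrable f volume a u) :
    HasDerivAt (fun t => ∫ s in a..t, f s) (f u) u :=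
  intervalIntegral.integral_hasDerivAt_right hint (hf.stronglyMeasurableAtFilter hU u hu)
    (hf.continuousAt (hU.mem_nhds hu))

theorem le_of_hasDerivAt_nonneg_off_finite {f : ℝ → ℝ} {s : Set ℝ} (hs : s.Finite) :
    ∀ {a b : ℝ}, a ≤ b → ContinuousOn f (Icc a b) →
      (∀ x ∈ Ioo a b \ s, ∃ f', HasDerivAt f f' x ∧ 0 ≤ f') → f a ≤ f b := by
  induction s, hs using Set.Finite.induction_on with
  | empty =>
    intro a b hab hf hf'
    have hder : ∀ x ∈ interior (Icc a b), ∃ f', HasDerivAt f f' x ∧ 0 ≤ f' := by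
      rw [interior_Icc]; exact fun x hx => hf' x ⟨hx, notMem_empty x⟩
    refine monotoneOn_of_deriv_nonneg (convex_Icc a b) hf
      (fun x hx => (hder x hx).choose_spec.1.differentiableAt.differentiableWithinAt)
      (fun x hx => ?_) (left_mem_Icc.mpr hab) (right_mem_Icc.mpr hab) hab
    obtain ⟨f', hf'x, hpos⟩ := hder x hx
    rwa [hf'x.deriv]
  | @insert d s _ _ ih =>
    intro a b hab hf hf'
    by_cases hd : d ∈ Ioo a b
    · refine (ih hd.1.le (hf.mono (Icc_subset_Icc_right hd.2.le)) fun x hx => ?_).trans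
        (ih hd.2.le (hf.mono (Icc_subset_Icc_left hd.1.le)) fun x hx => ?_)
      · exact hf' x ⟨⟨hx.1.1, hx.1.2.trans hd.2⟩, by simp [hx.2, hx.1.2.ne]⟩
      · exact hf' x ⟨⟨hd.1.trans hx.1.1, hx.1.2⟩, by simp [hx.2, hx.1.1.ne']⟩
    · exact ih hab hf fun x hx => hf' x ⟨hx.1, by
        simp only [mem_insert_iff, not_or]; exact ⟨fun h => hd (h ▸ hx.1), hx.2⟩⟩

theorem exists_tendsto_of_monotoneOn_Ici {f : ℝ → ℝ} {a M : ℝ} (hf : MonotoneOn f (Ici a))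
    (hM : ∀ t ≥ a, f t ≤ M) : ∃ l, Tendsto f atTop (𝓝 l) := by
  have hmono : Monotone fun t => f (max t a) := fun s t hst =>
    hf (le_max_right s a) (le_max_right t a) (max_le_max hst le_rfl)
  have hbdd : BddAbove (range fun t => f (max t a)) :=
    ⟨M, by rintro _ ⟨t, rfl⟩; exact hM _ (le_max_right t a)⟩
  refine ⟨_, (tendsto_atTop_ciSup hmono hbdd).congr' ?_⟩
  filter_upwards [eventually_ge_atTop a] with t ht
  rw [max_eq_left ht]

theorem ContinuousOn.intervalIntegrable_of_Ici {f : ℝ → ℝ} {a b : ℝ} (hf : ContinuousOn f (Ici 0))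
    (ha : 0 ≤ a) (hb : 0 ≤ b) : IntervalIntegrable f volume a b :=
  (hf.mono fun _ hs => le_trans (le_min ha hb) hs.1).intervalIntegrable

theorem le_zero_of_tendsto_of_tendsto_integral {f : ℝ → ℝ} {c l : ℝ}
    (hf : ContinuousOn f (Ici 0)) (hfc : Tendsto f atTop (𝓝 c))
    (hl : Tendsto (fun t => ∫ s in (0 : ℝ)..t, f s) atTop (𝓝 l)) : c ≤ 0 := by
  by_contra! hc
  obtain ⟨t₀, ht₀⟩ := eventually_atTop.mp
    ((hfc.eventually (lt_mem_nhds (half_lt_self hc))).and (eventually_ge_atTop 0))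
  have hlin : ∀ t ≥ t₀, (∫ s in (0 : ℝ)..t₀, f s) + c / 2 * (t - t₀) ≤ ∫ s in (0 : ℝ)..t, f s := by
    intro t ht
    have ht₀0 := (ht₀ t₀ le_rfl).2
    have hint := hf.intervalIntegrable_of_Ici ht₀0 (ht₀0.trans ht)
    rw [← intervalIntegral.integral_add_adjacent_intervals
      (hf.intervalIntegrable_of_Ici le_rfl ht₀0) hint]
    gcongr
    calc c / 2 * (t - t₀) = ∫ _ in t₀..t, c / 2 := by simp; ring
      _ ≤ ∫ s in t₀..t, f s :=
        intervalIntegral.integral_mono_on ht intervalIntegrable_const hint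
          fun s hs => (ht₀ s hs.1).1.le
  have hdiv : Tendsto (fun t => (∫ s in (0 : ℝ)..t₀, f s) + c / 2 * (t - t₀)) atTop atTop :=
    tendsto_atTop_add_const_left _ _
      ((tendsto_atTop_add_const_right _ _ tendsto_id).const_mul_atTop (half_pos hc))
  exact not_tendsto_nhds_of_tendsto_atTop
    (tendsto_atTop_mono' _ (eventually_atTop.mpr ⟨t₀, hlin⟩) hdiv) l hl

theorem eq_mul_exp_integral_of_eq_add_integral {a y : ℝ → ℝ} {D : Set ℝ} (hD : D.Finite)
    (ha : ContinuousOn a (Ioi 0 \ D)) (hai : ∀ t ≥ 0, IntervalIntegrable a volume 0 t)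
    (hy : ContinuousOn y (Ici 0)) (hya : ∀ t ≥ 0, y t = y 0 + ∫ s in (0 : ℝ)..t, a s * y s)
    {t : ℝ} (ht : 0 ≤ t) : y t = y 0 * Real.exp (∫ s in (0 : ℝ)..t, a s) := by
  set A : ℝ → ℝ := fun u => ∫ s in (0 : ℝ)..u, a s
  have hU : IsOpen (Ioi 0 \ D) := isOpen_Ioi.sdiff hD.isClosed
  have hyIcc : ∀ u ≥ 0, ContinuousOn y (uIcc 0 u) := fun u hu =>
    hy.mono (by rw [uIcc_of_le hu]; exact Icc_subset_Ici_self)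
  have hderiv : ∀ u ∈ Ioo 0 t \ D, HasDerivAt (fun u => y u * Real.exp (-A u)) 0 u := by
    rintro u ⟨hu, huD⟩
    have hA : HasDerivAt A (a u) u :=
      hasDerivAt_integral_of_continuousOn hU ha ⟨hu.1, huD⟩ (hai u hu.1.le)
    have hAy : HasDerivAt (fun v => y 0 + ∫ s in (0 : ℝ)..v, a s * y s) (a u * y u) u :=
      (hasDerivAt_integral_of_continuousOn hU (ha.mul (hy.mono fun v hv => mem_Ici.mpr hv.1.le))
        ⟨hu.1, huD⟩ ((hai u hu.1.le).mul_continuousOn (hyIcc u hu.1.le))).const_add _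
    have hy' : HasDerivAt y (a u * y u) u :=
      hAy.congr_of_eventuallyEq <| by
        filter_upwards [Ioi_mem_nhds hu.1] with v hv using hya v (le_of_lt hv)
    have h := hy'.mul hA.neg.exp
    rwa [show a u * y u * Real.exp ((-A) u) + y u * (Real.exp ((-A) u) * -a u) = 0 by ring] at h
  have hcont : ContinuousOn (fun u => y u * Real.exp (-A u)) (Icc 0 t) := by
    rw [← uIcc_of_le ht]
    exact (hyIcc t ht).mul
      (intervalIntegral.continuousOn_primitive_interval' (hai t ht) left_mem_uIcc).neg.rexp
  have hconst := integral_eq_of_hasDerivAt_off_countable_of_le _ (fun _ => (0 : ℝ)) ht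
    hD.countable hcont hderiv intervalIntegrable_const
  have hA0 : A 0 = 0 := intervalIntegral.integral_same
  simp only [intervalIntegral.integral_zero, hA0, neg_zero, Real.exp_zero, mul_one] at hconst
  calc y t = y t * Real.exp (-A t) * Real.exp (A t) := by
        rw [mul_assoc, ← Real.exp_add, neg_add_cancel, Real.exp_zero, mul_one]
    _ = y 0 * Real.exp (A t) := by rw [← sub_eq_zero.mp hconst.symm]

theorem IntervalIntegrable.indicator {f : ℝ → ℝ} {τ : Set ℝ} {a b : ℝ}
    (hf : IntervalIntegrable f volume a b) (hτ : MeasurableSet τ) :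
    IntervalIntegrable (τ.indicator f) volume a b := by
  rw [intervalIntegrable_iff] at hf ⊢
  exact hf.indicator hτ

theorem ContinuousOn.indicator_diff_frontier {f : ℝ → ℝ} {U τ : Set ℝ} (hf : ContinuousOn f U) :
    ContinuousOn (τ.indicator f) (U \ frontier τ) :=
  ContinuousOn.if (fun _ hx => absurd hx.2 hx.1.2) (hf.mono fun _ hx => hx.1.1)
    continuousOn_const

theorem monotoneOn_integral_of_nonneg {f : ℝ → ℝ}
    (hf : ∀ t ≥ 0, IntervalIntegrable f volume 0 t) (hf0 : ∀ s ≥ 0, 0 ≤ f s) :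
    MonotoneOn (fun t => ∫ s in (0 : ℝ)..t, f s) (Ici 0) := fun _ hs t _ hst =>
  intervalIntegral.integral_mono_interval le_rfl hs hst
    ((ae_restrict_mem measurableSet_Ioc).mono fun u hu => hf0 u hu.1.le) (hf t (hs.trans hst))

section betaFun

variable {βq βn : ℝ} {τ : Set ℝ}

theorem betaFun_mul (f : ℝ → ℝ) (t : ℝ) :
    betaFun βq βn τ t * f t = βn * f t - (βn - βq) * τ.indicator f t := by
  by_cases h : t ∈ τ
  · simp only [betaFun, h, if_true, indicator_of_mem]; ring
  · simp [betaFun, h]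

theorem continuousOn_betaFun : ContinuousOn (betaFun βq βn τ) (frontier τ)ᶜ :=
  ContinuousOn.if (fun _ hx => absurd hx.2 hx.1) continuousOn_const continuousOn_const

theorem continuousOn_betaFun_mul {f : ℝ → ℝ} (hf : ContinuousOn f (Ici 0)) :
    ContinuousOn (fun s => betaFun βq βn τ s * f s) (Ioi 0 \ frontier τ) :=
  (continuousOn_betaFun.mono fun _ hs => hs.2).mul
    (hf.mono (sdiff_subset.trans Ioi_subset_Ici_self))

theorem intervalIntegrable_betaFun_mul (hτ : MeasurableSet τ) {f : ℝ → ℝ}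
    (hf : ContinuousOn f (Ici 0)) {t : ℝ} (ht : 0 ≤ t) :
    IntervalIntegrable (fun s => betaFun βq βn τ s * f s) volume 0 t := by
  have hf' := hf.intervalIntegrable_of_Ici le_rfl ht
  simp_rw [betaFun_mul]
  exact (hf'.const_mul βn).sub ((hf'.indicator hτ).const_mul (βn - βq))

end betaFun

/-- With `f = I`, the infections that fall in quarantine periods up to time `t`; with `f = 1`, the
quarantine time used up to `t`. -/
def quarantineLoad (τ : Set ℝ) (f : ℝ → ℝ) (t : ℝ) : ℝ := ∫ s in (0 : ℝ)..t, τ.indicator f s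

section quarantineLoad

variable {τ : Set ℝ} {f : ℝ → ℝ}

theorem hasDerivAt_quarantineLoad (hτ : MeasurableSet τ) (hf : ContinuousOn f (Ici 0)) {u : ℝ}
    (hu : 0 < u) (hu' : u ∉ frontier τ) :
    HasDerivAt (quarantineLoad τ f) (τ.indicator f u) u :=
  hasDerivAt_integral_of_continuousOn (isOpen_Ioi.sdiff isClosed_frontier)
    (hf.mono Ioi_subset_Ici_self).indicator_diff_frontier ⟨hu, hu'⟩
    ((hf.intervalIntegrable_of_Ici le_rfl hu.le).indicator hτ)

theorem continuousOn_quarantineLoad (hτ : MeasurableSet τ) (hf : ContinuousOn f (Ici 0)) {t : ℝ}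
    (ht : 0 ≤ t) : ContinuousOn (quarantineLoad τ f) (Icc 0 t) := by
  rw [← uIcc_of_le ht]
  exact intervalIntegral.continuousOn_primitive_interval'
    ((hf.intervalIntegrable_of_Ici le_rfl ht).indicator hτ) left_mem_uIcc

theorem monotoneOn_quarantineLoad (hτ : MeasurableSet τ) (hf : ContinuousOn f (Ici 0))
    (hf0 : ∀ s ≥ 0, 0 ≤ f s) : MonotoneOn (quarantineLoad τ f) (Ici 0) :=
  monotoneOn_integral_of_nonneg
    (fun _ ht => (hf.intervalIntegrable_of_Ici le_rfl ht).indicator hτ)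
    fun s hs => indicator_nonneg (fun _ _ => hf0 s hs) s

theorem quarantineLoad_nonneg (hτ : MeasurableSet τ) (hf : ContinuousOn f (Ici 0))
    (hf0 : ∀ s ≥ 0, 0 ≤ f s) {t : ℝ} (ht : 0 ≤ t) : 0 ≤ quarantineLoad τ f t := by
  simpa [quarantineLoad] using monotoneOn_quarantineLoad hτ hf hf0 self_mem_Ici ht ht

theorem quarantineLoad_le_integral (hτ : MeasurableSet τ) (hf : ContinuousOn f (Ici 0))
    (hf0 : ∀ s ≥ 0, 0 ≤ f s) {t : ℝ} (ht : 0 ≤ t) :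
    quarantineLoad τ f t ≤ ∫ s in (0 : ℝ)..t, f s := by
  have hf' := hf.intervalIntegrable_of_Ici le_rfl ht
  refine intervalIntegral.integral_mono_on ht (hf'.indicator hτ) hf' fun s hs => ?_
  by_cases h : s ∈ τ
  · rw [indicator_of_mem h]
  · rw [indicator_of_notMem h]; exact hf0 s hs.1

theorem quarantineLoad_one_le {T : ℝ} (hτ : MeasurableSet τ) (hvol : volume τ = ENNReal.ofReal T)
    (hT : 0 ≤ T) {t : ℝ} (ht : 0 ≤ t) : quarantineLoad τ 1 t ≤ T := by
  rw [quarantineLoad, intervalIntegral.integral_of_le ht, setIntegral_indicator hτ]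
  simp only [Pi.one_apply, setIntegral_const, smul_eq_mul, mul_one]
  rw [← ENNReal.toReal_ofReal hT, ← hvol, measureReal_def]
  exact ENNReal.toReal_mono (by simp [hvol]) (measure_mono inter_subset_right)

theorem quarantineLoad_Icc_of_le {T t : ℝ} (ht : t ∈ Icc 0 T) :
    quarantineLoad (Icc 0 T) f t = ∫ s in (0 : ℝ)..t, f s :=
  intervalIntegral.integral_congr fun s hs => by
    rw [uIcc_of_le ht.1] at hs
    exact indicator_of_mem (show s ∈ Icc 0 T from ⟨hs.1, hs.2.trans ht.2⟩) f

theorem quarantineLoad_Icc_of_ge (hf : ContinuousOn f (Ici 0)) {T t : ℝ} (hT : 0 ≤ T)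
    (ht : T ≤ t) : quarantineLoad (Icc 0 T) f t = quarantineLoad (Icc 0 T) f T := by
  have hint := fun a b (ha : 0 ≤ a) (hb : 0 ≤ b) =>
    (hf.intervalIntegrable_of_Ici ha hb).indicator (measurableSet_Icc (a := (0 : ℝ)) (b := T))
  rw [quarantineLoad, ← intervalIntegral.integral_add_adjacent_intervals (hint 0 T le_rfl hT)
    (hint T t hT (hT.trans ht)), intervalIntegral.integral_of_le ht]
  rw [setIntegral_eq_zero_of_forall_eq_zero fun s hs => indicator_of_notMem
    (fun h => (not_le.mpr hs.1) h.2) f, add_zero]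
  rfl

end quarantineLoad

namespace MemTau

variable {T : ℝ} {τ : Set ℝ}

theorem measurableSet (h : MemTau T τ) : MeasurableSet τ := by
  obtain ⟨n, a, b, -, rfl⟩ := h.2.1
  exact MeasurableSet.iUnion fun i => measurableSet_Icc

theorem finite_frontier (h : MemTau T τ) : (frontier τ).Finite := by
  obtain ⟨n, a, b, hab, rfl⟩ := h.2.1
  refine ((finite_range a).union (finite_range b)).subset
    ((frontier_iUnion_subset_of_finite _).trans (iUnion_subset fun i => ?_))
  rw [frontier_Icc (hab i)]
  rintro x (rfl | rfl)
  exacts [Or.inl (mem_range_self i), Or.inr (mem_range_self i)]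

end MemTau

theorem memTau_Icc_zero {T : ℝ} (hT : 0 ≤ T) : MemTau T (Icc 0 T) :=
  ⟨fun _ hx => hx.1, ⟨1, fun _ => 0, fun _ => T, fun _ => hT, (iUnion_const _).symm⟩,
    by rw [Real.volume_Icc, sub_zero]⟩

structure IsQuarantineSIR (βq βn γ I₀ : ℝ) (τ : Set ℝ) (S I R : ℝ → ℝ) : Prop where
  βq_pos : 0 < βq
  βq_lt_βn : βq < βn
  γ_pos : 0 < γ
  I₀_mem : I₀ ∈ Ioo 0 1
  measurableSet : MeasurableSet τ
  /-- `β` jumps only on `frontier τ`, so the equations can be differentiated off a finite set. -/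
  finite_frontier : (frontier τ).Finite
  isSIRFull : IsSIRFull (betaFun βq βn τ) γ S I R
  S_zero : S 0 = 1 - I₀
  I_zero : I 0 = I₀
  R_zero : R 0 = 0

namespace IsQuarantineSIR

variable {βq βn γ I₀ : ℝ} {τ : Set ℝ} {S I R : ℝ → ℝ}

theorem continuousOn_S (h : IsQuarantineSIR βq βn γ I₀ τ S I R) : ContinuousOn S (Ici 0) :=
  h.isSIRFull.1.1

theorem continuousOn_I (h : IsQuarantineSIR βq βn γ I₀ τ S I R) : ContinuousOn I (Ici 0) :=
  h.isSIRFull.1.2.1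

theorem S_eq_exp (h : IsQuarantineSIR βq βn γ I₀ τ S I R) {t : ℝ} (ht : 0 ≤ t) :
    S t = (1 - I₀) * Real.exp (-∫ s in (0 : ℝ)..t, betaFun βq βn τ s * I s) := by
  rw [← h.S_zero, ← intervalIntegral.integral_neg]
  refine eq_mul_exp_integral_of_eq_add_integral (a := fun s => -(betaFun βq βn τ s * I s))
    h.finite_frontier (continuousOn_betaFun_mul h.continuousOn_I).neg
    (fun t ht => (intervalIntegrable_betaFun_mul h.measurableSet h.continuousOn_I ht).neg)
    h.continuousOn_S (fun t ht => ?_) ht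
  rw [(h.isSIRFull.1.2.2 t ht).1, sub_eq_add_neg, ← intervalIntegral.integral_neg]
  congr 1
  exact intervalIntegral.integral_congr fun s _ => by ring

theorem I_pos (h : IsQuarantineSIR βq βn γ I₀ τ S I R) {t : ℝ} (ht : 0 ≤ t) : 0 < I t := by
  rw [eq_mul_exp_integral_of_eq_add_integral (a := fun s => betaFun βq βn τ s * S s - γ)
    h.finite_frontier ((continuousOn_betaFun_mul h.continuousOn_S).sub continuousOn_const)
    (fun t ht => (intervalIntegrable_betaFun_mul h.measurableSet h.continuousOn_S ht).sub
      intervalIntegrable_const)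
    h.continuousOn_I (fun t ht => ?_) ht, h.I_zero]
  · exact mul_pos h.I₀_mem.1 (Real.exp_pos _)
  · rw [(h.isSIRFull.1.2.2 t ht).2]
    congr 1
    exact intervalIntegral.integral_congr fun s _ => by ring

theorem R_eq (h : IsQuarantineSIR βq βn γ I₀ τ S I R) {t : ℝ} (ht : 0 ≤ t) :
    R t = γ * ∫ s in (0 : ℝ)..t, I s := by
  rw [h.isSIRFull.2 t ht, h.R_zero, zero_add, intervalIntegral.integral_const_mul]

theorem S_add_I_add_R (h : IsQuarantineSIR βq βn γ I₀ τ S I R) {t : ℝ} (ht : 0 ≤ t) :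
    S t + I t + R t = 1 := by
  obtain ⟨hS, hI⟩ := h.isSIRFull.1.2.2 t ht
  have hSI : IntervalIntegrable (fun s => betaFun βq βn τ s * (S s * I s)) volume 0 t :=
    intervalIntegrable_betaFun_mul h.measurableSet (h.continuousOn_S.mul h.continuousOn_I) ht
  have hγI := (h.continuousOn_I.intervalIntegrable_of_Ici le_rfl ht).const_mul γ
  simp_rw [mul_assoc] at hS hI
  rw [intervalIntegral.integral_sub hSI hγI, intervalIntegral.integral_const_mul] at hI
  rw [hS, hI, h.R_eq ht, h.S_zero, h.I_zero]
  ring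

theorem integral_betaFun_mul_I (h : IsQuarantineSIR βq βn γ I₀ τ S I R) {t : ℝ} (ht : 0 ≤ t) :
    ∫ s in (0 : ℝ)..t, betaFun βq βn τ s * I s =
      βn * (∫ s in (0 : ℝ)..t, I s) - (βn - βq) * quarantineLoad τ I t := by
  have hI := h.continuousOn_I.intervalIntegrable_of_Ici le_rfl ht
  simp_rw [betaFun_mul]
  rw [intervalIntegral.integral_sub (hI.const_mul βn) ((hI.indicator h.measurableSet).const_mul _),
    intervalIntegral.integral_const_mul, intervalIntegral.integral_const_mul, quarantineLoad]

theorem quarantineLoad_I_nonneg (h : IsQuarantineSIR βq βn γ I₀ τ S I R) {t : ℝ} (ht : 0 ≤ t) :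
    0 ≤ quarantineLoad τ I t :=
  quarantineLoad_nonneg h.measurableSet h.continuousOn_I (fun _ hs => (h.I_pos hs).le) ht

end IsQuarantineSIR

/-- Along a trajectory quarantined from time `0` on, `I = quarantineProfile βq γ I₀ q` where `q`
is the quarantined load. -/
def quarantineProfile (βq γ I₀ u : ℝ) : ℝ := 1 - (1 - I₀) * Real.exp (-(βq * u)) - γ * u

/-- The quarantine time needed to reach the load `u` along `q' = quarantineProfile βq γ I₀ q`
(separation of variables). -/
def quarantineTime (βq γ I₀ u : ℝ) : ℝ := ∫ v in (0 : ℝ)..u, (quarantineProfile βq γ I₀ v)⁻¹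

section quarantineProfile

variable {βq γ I₀ : ℝ}

theorem continuous_quarantineProfile : Continuous (quarantineProfile βq γ I₀) := by
  unfold quarantineProfile
  fun_prop

theorem antitoneOn_quarantineProfile (hβq : 0 ≤ βq) (hβγ : βq ≤ γ) (hI₀ : I₀ ∈ Icc 0 1) :
    AntitoneOn (quarantineProfile βq γ I₀) (Ici 0) := by
  intro u hu v _ huv
  have hexp := Real.exp_neg_sub_exp_neg_le (mul_nonneg hβq hu) (mul_le_mul_of_nonneg_left huv hβq)
  unfold quarantineProfile
  nlinarith [mul_le_mul_of_nonneg_left hexp (sub_nonneg.mpr hI₀.2),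
    mul_nonneg hI₀.1 (mul_nonneg hβq (sub_nonneg.mpr huv)),
    mul_nonneg (sub_nonneg.mpr hβγ) (sub_nonneg.mpr huv)]

theorem hasDerivAt_quarantineTime {u : ℝ} (hu : 0 ≤ u)
    (hpos : ∀ v ∈ Icc 0 u, 0 < quarantineProfile βq γ I₀ v) :
    HasDerivAt (quarantineTime βq γ I₀) (quarantineProfile βq γ I₀ u)⁻¹ u :=
  hasDerivAt_integral_of_continuousOn
    (isOpen_ne_fun continuous_quarantineProfile continuous_const)
    (continuous_quarantineProfile.continuousOn.inv₀ fun _ hv => hv)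
    (hpos u (right_mem_Icc.mpr hu)).ne'
    (ContinuousOn.intervalIntegrable (continuous_quarantineProfile.continuousOn.inv₀
      fun v hv => (hpos v (by rwa [uIcc_of_le hu] at hv)).ne'))

theorem strictMonoOn_quarantineTime {u : ℝ}
    (hpos : ∀ v ∈ Icc 0 u, 0 < quarantineProfile βq γ I₀ v) :
    StrictMonoOn (quarantineTime βq γ I₀) (Icc 0 u) := by
  have hderiv : ∀ v ∈ Icc 0 u,
      HasDerivAt (quarantineTime βq γ I₀) (quarantineProfile βq γ I₀ v)⁻¹ v := fun v hv =>
    hasDerivAt_quarantineTime hv.1 fun w hw => hpos w ⟨hw.1, hw.2.trans hv.2⟩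
  refine strictMonoOn_of_deriv_pos (convex_Icc 0 u)
    (fun v hv => (hderiv v hv).continuousAt.continuousWithinAt) fun v hv => ?_
  rw [interior_Icc] at hv
  rw [(hderiv v (Ioo_subset_Icc_self hv)).deriv]
  exact inv_pos.mpr (hpos v (Ioo_subset_Icc_self hv))

end quarantineProfile

namespace IsQuarantineSIR

variable {βq βn γ I₀ T : ℝ} {τ : Set ℝ} {S I R : ℝ → ℝ}

theorem I_le_quarantineProfile (h : IsQuarantineSIR βq βn γ I₀ τ S I R) (hsub : βn ≤ γ) {t : ℝ}
    (ht : 0 ≤ t) : I t ≤ quarantineProfile βq γ I₀ (quarantineLoad τ I t) := by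
  have hI0 : ∀ s ≥ 0, 0 ≤ I s := fun s hs => (h.I_pos hs).le
  have hq0 := h.quarantineLoad_I_nonneg ht
  have hqP := quarantineLoad_le_integral h.measurableSet h.continuousOn_I hI0 ht
  have hSIR := h.S_add_I_add_R ht
  rw [h.S_eq_exp ht, h.integral_betaFun_mul_I ht, h.R_eq ht] at hSIR
  have hexp := Real.exp_neg_sub_exp_neg_le (mul_nonneg h.βq_pos.le hq0)
    (show βq * quarantineLoad τ I t ≤ βn * (∫ s in (0 : ℝ)..t, I s) -
      (βn - βq) * quarantineLoad τ I t by
        nlinarith [mul_le_mul_of_nonneg_left hqP (h.βq_pos.trans h.βq_lt_βn).le])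
  have hβPq := mul_nonneg (h.βq_pos.trans h.βq_lt_βn).le (sub_nonneg.mpr hqP)
  unfold quarantineProfile
  nlinarith [mul_le_mul_of_nonneg_left hexp (sub_nonneg.mpr h.I₀_mem.2.le),
    mul_nonneg h.I₀_mem.1.le hβPq, mul_nonneg (sub_nonneg.mpr hsub) (sub_nonneg.mpr hqP)]

theorem quarantineProfile_pos (h : IsQuarantineSIR βq βn γ I₀ τ S I R) (hsub : βn ≤ γ) {t : ℝ}
    (ht : 0 ≤ t) : ∀ v ∈ Icc 0 (quarantineLoad τ I t), 0 < quarantineProfile βq γ I₀ v :=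
  fun _ hv => (h.I_pos ht).trans_le <| (h.I_le_quarantineProfile hsub ht).trans <|
    antitoneOn_quarantineProfile h.βq_pos.le (h.βq_lt_βn.le.trans hsub)
      (Ioo_subset_Icc_self h.I₀_mem) hv.1 (hv.1.trans hv.2) hv.2


theorem hasDerivAt_quarantineTime_load (h : IsQuarantineSIR βq βn γ I₀ τ S I R) (hsub : βn ≤ γ)
    {u : ℝ} (hu : 0 < u) (hu' : u ∉ frontier τ) :
    HasDerivAt (fun t => quarantineTime βq γ I₀ (quarantineLoad τ I t))
      ((quarantineProfile βq γ I₀ (quarantineLoad τ I u))⁻¹ * τ.indicator I u) u :=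
  (hasDerivAt_quarantineTime (h.quarantineLoad_I_nonneg hu.le)
    (h.quarantineProfile_pos hsub hu.le)).comp u
    (hasDerivAt_quarantineLoad h.measurableSet h.continuousOn_I hu hu')

theorem continuousOn_quarantineTime_load (h : IsQuarantineSIR βq βn γ I₀ τ S I R)
    (hsub : βn ≤ γ) {t : ℝ} (ht : 0 ≤ t) :
    ContinuousOn (fun t => quarantineTime βq γ I₀ (quarantineLoad τ I t)) (Icc 0 t) :=
  fun s hs => (hasDerivAt_quarantineTime (h.quarantineLoad_I_nonneg hs.1)
    (h.quarantineProfile_pos hsub hs.1)).continuousAt.comp_continuousWithinAt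
      (continuousOn_quarantineLoad h.measurableSet h.continuousOn_I ht s hs)

/-- `w - Φ ∘ q` is nondecreasing: on quarantine periods `dq = I dw ≤ G(q) dw`, elsewhere
`q` and `w` are locally constant. -/
theorem quarantineTime_load_le (h : IsQuarantineSIR βq βn γ I₀ τ S I R) (hsub : βn ≤ γ) {t : ℝ}
    (ht : 0 ≤ t) : quarantineTime βq γ I₀ (quarantineLoad τ I t) ≤ quarantineLoad τ 1 t := by
  have hmono := le_of_hasDerivAt_nonneg_off_finite
    (f := fun t => quarantineLoad τ 1 t - quarantineTime βq γ I₀ (quarantineLoad τ I t))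
    h.finite_frontier ht
    ((continuousOn_quarantineLoad h.measurableSet continuousOn_const ht).sub
      (h.continuousOn_quarantineTime_load hsub ht))
    fun u ⟨hu, hu'⟩ =>
      ⟨_, (hasDerivAt_quarantineLoad h.measurableSet continuousOn_const hu.1 hu').sub
        (h.hasDerivAt_quarantineTime_load hsub hu.1 hu'), ?_⟩
  · simpa [quarantineLoad, quarantineTime] using hmono
  · have hG := h.quarantineProfile_pos hsub hu.1.le _
      (right_mem_Icc.mpr (h.quarantineLoad_I_nonneg hu.1.le))
    by_cases huτ : u ∈ τ
    · simp only [indicator_of_mem huτ]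
      show (0 : ℝ) ≤ 1 - _
      rw [sub_nonneg, inv_mul_le_one₀ hG]
      exact h.I_le_quarantineProfile hsub hu.1.le
    · simp [huτ]

theorem I_eq_quarantineProfile_of_Icc (h : IsQuarantineSIR βq βn γ I₀ (Icc 0 T) S I R) {t : ℝ}
    (ht : t ∈ Icc 0 T) : I t = quarantineProfile βq γ I₀ (quarantineLoad (Icc 0 T) I t) := by
  have hSIR := h.S_add_I_add_R ht.1
  rw [h.S_eq_exp ht.1, h.integral_betaFun_mul_I ht.1, h.R_eq ht.1,
    quarantineLoad_Icc_of_le ht, ← sub_mul, sub_sub_cancel] at hSIR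
  rw [quarantineLoad_Icc_of_le ht, quarantineProfile]
  linear_combination hSIR

theorem quarantineTime_load_Icc (h : IsQuarantineSIR βq βn γ I₀ (Icc 0 T) S I R)
    (hsub : βn ≤ γ) (hT : 0 ≤ T) : quarantineTime βq γ I₀ (quarantineLoad (Icc 0 T) I T) = T := by
  have hderiv : ∀ u ∈ Ioo 0 T,
      HasDerivAt (fun t => quarantineTime βq γ I₀ (quarantineLoad (Icc 0 T) I t)) 1 u := by
    intro u hu
    have hu' : u ∉ frontier (Icc 0 T) := by
      rw [frontier_Icc hT]
      rintro (rfl | rfl)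
      exacts [lt_irrefl _ hu.1, lt_irrefl _ hu.2]
    have hd := h.hasDerivAt_quarantineTime_load hsub hu.1 hu'
    rwa [indicator_of_mem (Ioo_subset_Icc_self hu), ← h.I_eq_quarantineProfile_of_Icc
      (Ioo_subset_Icc_self hu), inv_mul_cancel₀ (h.I_pos hu.1.le).ne'] at hd
  have hFTC := intervalIntegral.integral_eq_sub_of_hasDerivAt_of_le hT
    (h.continuousOn_quarantineTime_load hsub hT) hderiv intervalIntegrable_const
  simpa [quarantineLoad, quarantineTime] using hFTC.symm

theorem quarantineLoad_le_of_Icc {S₁ I₁ R₁ : ℝ → ℝ} (h : IsQuarantineSIR βq βn γ I₀ τ S I R)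
    (h₁ : IsQuarantineSIR βq βn γ I₀ (Icc 0 T) S₁ I₁ R₁) (hvol : volume τ = ENNReal.ofReal T)
    (hsub : βn ≤ γ) (hT : 0 ≤ T) {t : ℝ} (ht : 0 ≤ t) :
    quarantineLoad τ I t ≤ quarantineLoad (Icc 0 T) I₁ T := by
  by_contra! hlt
  have hq₁ := h₁.quarantineLoad_I_nonneg hT
  have hmono := strictMonoOn_quarantineTime (h.quarantineProfile_pos hsub ht)
    ⟨hq₁, hlt.le⟩ ⟨hq₁.trans hlt.le, le_rfl⟩ hlt
  have hw := quarantineLoad_one_le h.measurableSet hvol hT ht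
  linarith [h₁.quarantineTime_load_Icc hsub hT, h.quarantineTime_load_le hsub ht]

end IsQuarantineSIR

/-- `L` is the final size `R(∞)` of an epidemic whose final quarantined load is `q`: the total
force of infection is `X = ∫₀^∞ β I = βn R(∞)/γ - (βn - βq) q`, and `S(∞) = (1 - I₀) e^{-X}`. -/
def IsFinalSize (βq βn γ I₀ q L : ℝ) : Prop :=
  0 ≤ βn * (L / γ) - (βn - βq) * q ∧
    L = 1 - (1 - I₀) * Real.exp (-(βn * (L / γ) - (βn - βq) * q))

theorem IsFinalSize.le {βq βn γ I₀ q₁ q₂ L₁ L₂ : ℝ} (hβ : βq ≤ βn) (hγ : 0 < γ) (hsub : βn ≤ γ)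
    (hI₀ : I₀ ∈ Ioo 0 1) (h₁ : IsFinalSize βq βn γ I₀ q₁ L₁) (h₂ : IsFinalSize βq βn γ I₀ q₂ L₂)
    (hq : q₂ ≤ q₁) : L₁ ≤ L₂ := by
  set X₁ := βn * (L₁ / γ) - (βn - βq) * q₁
  set X₂ := βn * (L₂ / γ) - (βn - βq) * q₂
  by_contra! hL
  have hX : X₂ < X₁ := by
    have : Real.exp (-X₁) < Real.exp (-X₂) := by nlinarith [h₁.2, h₂.2, hI₀.2]
    linarith [Real.exp_lt_exp.mp this]
  have hexp := Real.exp_neg_sub_exp_neg_le h₂.1 hX.le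
  have hγL : βn * ((L₁ - L₂) / γ) ≤ L₁ - L₂ := by
    calc βn * ((L₁ - L₂) / γ) ≤ γ * ((L₁ - L₂) / γ) :=
          mul_le_mul_of_nonneg_right hsub (div_nonneg (by linarith) hγ.le)
      _ = L₁ - L₂ := mul_div_cancel₀ _ hγ.ne'
  have hXL : X₁ - X₂ ≤ βn * ((L₁ - L₂) / γ) := by
    simp only [X₁, X₂, sub_div]
    nlinarith [mul_le_mul_of_nonneg_left hq (sub_nonneg.mpr hβ)]
  nlinarith [h₁.2, h₂.2, mul_le_mul_of_nonneg_left hexp (sub_nonneg.mpr hI₀.2.le),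
    mul_pos hI₀.1 (sub_pos.mpr hX)]

namespace IsQuarantineSIR

variable {βq βn γ I₀ : ℝ} {τ : Set ℝ} {S I R : ℝ → ℝ}

theorem tendsto_integral_I (h : IsQuarantineSIR βq βn γ I₀ τ S I R) {L : ℝ}
    (hL : Tendsto R atTop (𝓝 L)) :
    Tendsto (fun t => ∫ s in (0 : ℝ)..t, I s) atTop (𝓝 (L / γ)) :=
  (hL.div_const γ).congr' <| (eventually_ge_atTop 0).mono fun t ht => by
    rw [h.R_eq ht, mul_div_cancel_left₀ _ h.γ_pos.ne']

theorem exists_isFinalSize (h : IsQuarantineSIR βq βn γ I₀ τ S I R) {L : ℝ}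
    (hL : Tendsto R atTop (𝓝 L)) :
    ∃ q, Tendsto (quarantineLoad τ I) atTop (𝓝 q) ∧ IsFinalSize βq βn γ I₀ q L := by
  have hI0 : ∀ s ≥ 0, 0 ≤ I s := fun _ hs => (h.I_pos hs).le
  have hP := h.tendsto_integral_I hL
  have hPle : ∀ t ≥ 0, ∫ s in (0 : ℝ)..t, I s ≤ L / γ := fun t ht =>
    ge_of_tendsto hP <| (eventually_ge_atTop t).mono fun u hu =>
      monotoneOn_integral_of_nonneg
        (fun _ hs => h.continuousOn_I.intervalIntegrable_of_Ici le_rfl hs) hI0 ht (ht.trans hu) hu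
  have hqP := fun t (ht : t ≥ 0) =>
    quarantineLoad_le_integral h.measurableSet h.continuousOn_I hI0 ht
  obtain ⟨q, hq⟩ := exists_tendsto_of_monotoneOn_Ici
    (monotoneOn_quarantineLoad h.measurableSet h.continuousOn_I hI0)
    fun t ht => (hqP t ht).trans (hPle t ht)
  have hq0 : 0 ≤ q :=
    ge_of_tendsto hq <| (eventually_ge_atTop 0).mono fun _ ht => h.quarantineLoad_I_nonneg ht
  have hqL : q ≤ L / γ := le_of_tendsto_of_tendsto hq hP <| (eventually_ge_atTop 0).mono hqP
  set X := βn * (L / γ) - (βn - βq) * q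
  have hS : Tendsto S atTop (𝓝 ((1 - I₀) * Real.exp (-X))) :=
    (((hP.const_mul βn).sub (hq.const_mul (βn - βq))).neg.rexp.const_mul _).congr' <|
      (eventually_ge_atTop 0).mono fun t ht => by rw [h.S_eq_exp ht, h.integral_betaFun_mul_I ht]
  have hI : Tendsto I atTop (𝓝 (1 - (1 - I₀) * Real.exp (-X) - L)) :=
    ((tendsto_const_nhds.sub hS).sub hL).congr' <|
      (eventually_ge_atTop 0).mono fun t ht => by linarith [h.S_add_I_add_R ht]
  have hI_le := le_zero_of_tendsto_of_tendsto_integral h.continuousOn_I hI hP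
  have hI_ge := ge_of_tendsto hI <| (eventually_ge_atTop 0).mono hI0
  refine ⟨q, hq, ?_, by linarith⟩
  nlinarith [mul_le_mul_of_nonneg_left hqL (h.βq_pos.trans h.βq_lt_βn).le,
    mul_nonneg h.βq_pos.le hq0]

end IsQuarantineSIR

/-- if `βₙ ≤ γ`, then the interval `[0, T]` minimizes `R^τ(∞)` over `𝒯`. -/
theorem initial_interval_minimizes_of_subcritical
    (βq βn γ T I₀ : ℝ) (hβq : 0 < βq) (hβ : βq < βn) (hγ : 0 < γ) (hT : 0 < T)
    (hI₀ : I₀ ∈ Ioo (0 : ℝ) 1) (hsub : βn ≤ γ)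
    (S I R : ℝ → ℝ) (hsol : IsSIRFull (betaFun βq βn (Icc 0 T)) γ S I R)
    (hS0 : S 0 = 1 - I₀) (hI0 : I 0 = I₀) (hR0 : R 0 = 0)
    (L : ℝ) (hL : Tendsto R atTop (𝓝 L)) :
    ∀ σ : Set ℝ, MemTau T σ →
      ∀ S' I' R' : ℝ → ℝ, IsSIRFull (betaFun βq βn σ) γ S' I' R' →
        S' 0 = 1 - I₀ → I' 0 = I₀ → R' 0 = 0 →
        ∀ L' : ℝ, Tendsto R' atTop (𝓝 L') → L ≤ L' := by
  intro σ hσ S' I' R' hsol' hS0' hI0' hR0' L' hL'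
  have hIcc := memTau_Icc_zero hT.le
  have h₁ : IsQuarantineSIR βq βn γ I₀ (Icc 0 T) S I R :=
    ⟨hβq, hβ, hγ, hI₀, hIcc.measurableSet, hIcc.finite_frontier, hsol, hS0, hI0, hR0⟩
  have h₂ : IsQuarantineSIR βq βn γ I₀ σ S' I' R' :=
    ⟨hβq, hβ, hγ, hI₀, hσ.measurableSet, hσ.finite_frontier, hsol', hS0', hI0', hR0'⟩
  obtain ⟨q₁, hq₁, hfs₁⟩ := h₁.exists_isFinalSize hL
  obtain ⟨q₂, hq₂, hfs₂⟩ := h₂.exists_isFinalSize hL'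
  have hq₁T : q₁ = quarantineLoad (Icc 0 T) I T :=
    tendsto_nhds_unique hq₁ <| tendsto_const_nhds.congr' <| (eventually_ge_atTop T).mono
      fun t ht => (quarantineLoad_Icc_of_ge h₁.continuousOn_I hT.le ht).symm
  have hq₂q₁ : q₂ ≤ q₁ := hq₁T ▸ le_of_tendsto hq₂ ((eventually_ge_atTop 0).mono fun t ht =>
    h₂.quarantineLoad_le_of_Icc h₁ hσ.2.2 hsub hT.le ht)
  exact hfs₁.le hβ.le hγ hsub hI₀ hfs₂ hq₂q₁
end
end

section
/- Let β, γ > 0 be constants and let (S, I) solve ∂_t S = −β S I, ∂_t I = β S I − γ I on [0,∞) with S(0) = S₀ ∈ (0,1), I(0) = I₀ ∈ (0,1), S₀ + I₀ ≤ 1. Then the limit S(∞) = lim_{t→∞} S(t) exists, I(t) → 0 as t → ∞, S(∞) ∈ (0, γ/β), and S(∞) satisfies the transcendental equation S(∞) − (γ/β) log S(∞) = S₀ + I₀ − (γ/β) log S₀. -/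
open Set Filter MeasureTheory Topology Asymptotics
open scoped Classical

noncomputable section

/-!
Both equations are linear in the unknown they differentiate (`S' = (-β I) S`, `I' = (β S - γ) I`),
so `S` and `I` stay positive. Then `S` and `S + I` (whose derivative is `-γ I`) are decreasing and
bounded below, hence converge; so `I` converges too, and its limit is `0` because the derivative of
the convergent function `S + I` cannot have a nonzero limit. Along solutions
`S + I - (γ/β) log S` is conserved; solving for `log S` shows that `log S` converges, so
`S(∞) = exp (lim log S) > 0` and the conservation law passes to the limit. Finally, if
`S(∞) ≥ γ/β` then `I' = I (β S - γ) ≥ 0` for all time, which is incompatible with `I → 0`.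
-/

open Real

section Ici

variable {f f' c : ℝ → ℝ} {a : ℝ}

theorem eq_of_hasDerivWithinAt_Ici_eq_zero (hf : ∀ t ∈ Ici a, HasDerivWithinAt f 0 (Ici a) t)
    {t : ℝ} (ht : a ≤ t) : f t = f a :=
  constant_of_has_deriv_right_zero
    (fun x hx ↦ (hf x hx.1).continuousWithinAt.mono Icc_subset_Ici_self)
    (fun x hx ↦ (hf x hx.1).mono (Ici_subset_Ici.2 hx.1)) t ⟨ht, le_rfl⟩

theorem antitoneOn_Ici_of_hasDerivWithinAt_nonpos
    (hf : ∀ t ∈ Ici a, HasDerivWithinAt f (f' t) (Ici a) t) (hf' : ∀ t ∈ Ioi a, f' t ≤ 0) :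
    AntitoneOn f (Ici a) := by
  refine antitoneOn_of_hasDerivWithinAt_nonpos (convex_Ici a)
    (fun t ht ↦ (hf t ht).continuousWithinAt) (fun t ht ↦ ?_) (by simpa using hf')
  rw [interior_Ici] at ht ⊢
  exact (hf t (Ioi_subset_Ici_self ht)).mono Ioi_subset_Ici_self

theorem monotoneOn_Ici_of_hasDerivWithinAt_nonneg
    (hf : ∀ t ∈ Ici a, HasDerivWithinAt f (f' t) (Ici a) t) (hf' : ∀ t ∈ Ioi a, 0 ≤ f' t) :
    MonotoneOn f (Ici a) := by
  have := antitoneOn_Ici_of_hasDerivWithinAt_nonpos (fun t ht ↦ (hf t ht).neg)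
    (fun t ht ↦ neg_nonpos.2 (hf' t ht))
  exact fun x hx y hy hxy ↦ neg_le_neg_iff.1 (this hx hy hxy)

/-- `f * exp (-∫ c)` is constant. -/
theorem pos_of_hasDerivWithinAt_Ici_mul (hc : ContinuousOn c (Ici a))
    (hf : ∀ t ∈ Ici a, HasDerivWithinAt f (c t * f t) (Ici a) t) (ha : 0 < f a)
    {t : ℝ} (ht : a ≤ t) : 0 < f t := by
  set F : ℝ → ℝ := fun u ↦ ∫ s in a..u, c (max a s)
  have hcont : Continuous fun s ↦ c (max a s) :=
    hc.comp_continuous (continuous_const.max continuous_id) fun s ↦ le_max_left a s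
  have hF : ∀ u ∈ Ici a, HasDerivAt F (c u) u := fun u hu ↦ by
    simpa [max_eq_right (mem_Ici.1 hu)] using (hcont.integral_hasStrictDerivAt a u).hasDerivAt
  have hconst : ∀ u ∈ Ici a, HasDerivWithinAt (fun u ↦ f u * exp (-F u)) 0 (Ici a) u :=
    fun u hu ↦ ((hf u hu).fun_mul (hF u hu).neg.exp.hasDerivWithinAt).congr_deriv (by ring)
  have key := eq_of_hasDerivWithinAt_Ici_eq_zero hconst ht
  simp only [F, intervalIntegral.integral_same, neg_zero, exp_zero, mul_one] at key
  exact (mul_pos_iff_of_pos_right (exp_pos _)).1 (key ▸ ha)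

theorem AntitoneOn.exists_tendsto_atTop_of_bddBelow (hf : AntitoneOn f (Ici a))
    (hb : BddBelow (f '' Ici a)) :
    ∃ L, Tendsto f atTop (𝓝 L) ∧ ∀ t ∈ Ici a, L ≤ f t := by
  set g : ℝ → ℝ := fun t ↦ f (max a t)
  have hg : Antitone g := fun s t hst ↦
    hf (le_max_left a s) (le_max_left a t) (max_le_max le_rfl hst)
  have hgb : BddBelow (range g) :=
    hb.mono (range_subset_iff.2 fun t ↦ mem_image_of_mem f (le_max_left a t))
  have hgf : g =ᶠ[atTop] f := by
    filter_upwards [eventually_ge_atTop a] with t ht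
    simp [g, max_eq_right ht]
  refine ⟨⨅ t, g t, (tendsto_atTop_ciInf hg hgb).congr' hgf, fun t ht ↦ ?_⟩
  simpa [g, max_eq_right (mem_Ici.1 ht)] using hg.le_of_tendsto (tendsto_atTop_ciInf hg hgb) t

/-- A derivative with a negative limit would drive `f` to `-∞`. -/
theorem nonneg_of_tendsto_of_hasDerivWithinAt_Ici
    (hf : ∀ t ∈ Ici a, HasDerivWithinAt f (f' t) (Ici a) t) {L l : ℝ}
    (hfL : Tendsto f atTop (𝓝 L)) (hf'l : Tendsto f' atTop (𝓝 l)) : 0 ≤ l := by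
  by_contra! hl
  obtain ⟨t₀, ht₀⟩ := eventually_atTop.1
    ((hf'l.eventually (eventually_lt_nhds (by linarith : l < l / 2))).and (eventually_ge_atTop a))
  have ht₀a : a ≤ t₀ := (ht₀ t₀ le_rfl).2
  have hanti : AntitoneOn (fun t ↦ f t - l / 2 * t) (Ici t₀) :=
    antitoneOn_Ici_of_hasDerivWithinAt_nonpos (f' := fun t ↦ f' t - l / 2)
      (fun t ht ↦ ((hf t (ht₀a.trans ht)).mono (Ici_subset_Ici.2 ht₀a)).sub
        ((hasDerivWithinAt_id t _).const_mul (l / 2)) |>.congr_deriv (by ring))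
      (fun t ht ↦ sub_nonpos.2 (ht₀ t (le_of_lt ht)).1.le)
  have hbound : ∀ᶠ t in atTop, f t ≤ f t₀ + l / 2 * (t - t₀) := by
    filter_upwards [eventually_ge_atTop t₀] with t ht
    linarith [hanti self_mem_Ici ht ht]
  have hlin : Tendsto (fun t ↦ f t₀ + l / 2 * (t - t₀)) atTop atBot :=
    tendsto_atBot_add_const_left _ _ <|
      (tendsto_atTop_add_const_right _ _ tendsto_id).const_mul_atTop_of_neg (by linarith)
  exact not_tendsto_nhds_of_tendsto_atBot (tendsto_atBot_mono' _ hbound hlin) L hfL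

theorem eq_zero_of_tendsto_of_hasDerivWithinAt_Ici
    (hf : ∀ t ∈ Ici a, HasDerivWithinAt f (f' t) (Ici a) t) {L l : ℝ}
    (hfL : Tendsto f atTop (𝓝 L)) (hf'l : Tendsto f' atTop (𝓝 l)) : l = 0 :=
  le_antisymm
    (neg_nonneg.1 (nonneg_of_tendsto_of_hasDerivWithinAt_Ici (fun t ht ↦ (hf t ht).neg)
      hfL.neg hf'l.neg))
    (nonneg_of_tendsto_of_hasDerivWithinAt_Ici hf hfL hf'l)

end Ici

section SIR

variable {β γ : ℝ} {S I : ℝ → ℝ}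

theorem sir_first_integral (hβ : β ≠ 0)
    (hS : ∀ t ∈ Ici (0 : ℝ), HasDerivWithinAt S (-(β * S t * I t)) (Ici 0) t)
    (hI : ∀ t ∈ Ici (0 : ℝ), HasDerivWithinAt I (β * S t * I t - γ * I t) (Ici 0) t)
    (hSpos : ∀ t ∈ Ici (0 : ℝ), 0 < S t) {t : ℝ} (ht : 0 ≤ t) :
    S t + I t - γ / β * log (S t) = S 0 + I 0 - γ / β * log (S 0) := by
  refine eq_of_hasDerivWithinAt_Ici_eq_zero (f := fun t ↦ S t + I t - γ / β * log (S t))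
    (fun u hu ↦ ?_) ht
  have hlog := (hS u hu).log (hSpos u hu).ne'
  refine (((hS u hu).fun_add (hI u hu)).fun_sub (hlog.const_mul (γ / β))).congr_deriv ?_
  field_simp [(hSpos u hu).ne']
  ring

theorem sir_exists_limit (hβ : 0 ≤ β) (hγ : 0 < γ)
    (hS : ∀ t ∈ Ici (0 : ℝ), HasDerivWithinAt S (-(β * S t * I t)) (Ici 0) t)
    (hI : ∀ t ∈ Ici (0 : ℝ), HasDerivWithinAt I (β * S t * I t - γ * I t) (Ici 0) t)
    (hSpos : ∀ t ∈ Ici (0 : ℝ), 0 < S t) (hIpos : ∀ t ∈ Ici (0 : ℝ), 0 < I t) :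
    ∃ B, Tendsto S atTop (𝓝 B) ∧ (∀ t ∈ Ici 0, B ≤ S t) ∧ Tendsto I atTop (𝓝 0) := by
  have hSanti : AntitoneOn S (Ici 0) :=
    antitoneOn_Ici_of_hasDerivWithinAt_nonpos hS fun t ht ↦ by
      have := mul_pos (hSpos t (Ioi_subset_Ici_self ht)) (hIpos t (Ioi_subset_Ici_self ht))
      nlinarith
  have hW : ∀ t ∈ Ici (0 : ℝ), HasDerivWithinAt (fun t ↦ S t + I t) (-γ * I t) (Ici 0) t :=
    fun t ht ↦ ((hS t ht).fun_add (hI t ht)).congr_deriv (by ring)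
  have hWanti : AntitoneOn (fun t ↦ S t + I t) (Ici 0) :=
    antitoneOn_Ici_of_hasDerivWithinAt_nonpos hW fun t ht ↦ by
      nlinarith [hIpos t (Ioi_subset_Ici_self ht)]
  obtain ⟨B, hSB, hBS⟩ := hSanti.exists_tendsto_atTop_of_bddBelow
    ⟨0, forall_mem_image.2 fun t ht ↦ (hSpos t ht).le⟩
  obtain ⟨A, hWA, -⟩ := hWanti.exists_tendsto_atTop_of_bddBelow
    ⟨0, forall_mem_image.2 fun t ht ↦ (add_pos (hSpos t ht) (hIpos t ht)).le⟩
  have hIL : Tendsto I atTop (𝓝 (A - B)) := by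
    simpa using hWA.sub hSB
  have hzero := eq_zero_of_tendsto_of_hasDerivWithinAt_Ici hW hWA (hIL.const_mul (-γ))
  refine ⟨B, hSB, hBS, ?_⟩
  rw [mul_eq_zero_iff_left (neg_ne_zero.2 hγ.ne')] at hzero
  rwa [hzero] at hIL

theorem sir_limit_lt_threshold (hβ : 0 < β)
    (hI : ∀ t ∈ Ici (0 : ℝ), HasDerivWithinAt I (β * S t * I t - γ * I t) (Ici 0) t)
    (hIpos : ∀ t ∈ Ici (0 : ℝ), 0 < I t) {B : ℝ} (hBS : ∀ t ∈ Ici 0, B ≤ S t)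
    (hIlim : Tendsto I atTop (𝓝 0)) : B < γ / β := by
  by_contra! hB
  have hImono : MonotoneOn I (Ici 0) :=
    monotoneOn_Ici_of_hasDerivWithinAt_nonneg hI fun t ht ↦ by
      have hγS : γ ≤ β * S t := (div_le_iff₀' hβ).1 (hB.trans (hBS t (Ioi_subset_Ici_self ht)))
      nlinarith [hIpos t (Ioi_subset_Ici_self ht)]
  have hI0 : I 0 ≤ 0 := ge_of_tendsto hIlim <| by
    filter_upwards [eventually_ge_atTop 0] with t ht
    exact hImono self_mem_Ici ht ht
  exact (hIpos 0 self_mem_Ici).not_ge hI0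

theorem sir_limit_pos_and_eq (hβ : β ≠ 0) (hγ : γ ≠ 0) {H B : ℝ}
    (hSpos : ∀ t ∈ Ici (0 : ℝ), 0 < S t)
    (hH : ∀ t ∈ Ici (0 : ℝ), S t + I t - γ / β * log (S t) = H)
    (hSlim : Tendsto S atTop (𝓝 B)) (hIlim : Tendsto I atTop (𝓝 0)) :
    0 < B ∧ B - γ / β * log B = H := by
  set ℓ := β / γ * (B - H) with hℓ
  have hlog : Tendsto (fun t ↦ log (S t)) atTop (𝓝 ℓ) := by
    have : Tendsto (fun t ↦ β / γ * (S t + I t - H)) atTop (𝓝 ℓ) := by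
      simpa using ((hSlim.add hIlim).sub_const H).const_mul (β / γ)
    refine this.congr' ?_
    filter_upwards [eventually_ge_atTop 0] with t ht
    rw [← hH t ht]
    field_simp
    ring
  have hB : B = exp ℓ :=
    tendsto_nhds_unique hSlim <| (continuous_exp.tendsto ℓ).comp hlog |>.congr' <| by
      filter_upwards [eventually_ge_atTop 0] with t ht
      exact exp_log (hSpos t ht)
  refine ⟨hB ▸ exp_pos ℓ, ?_⟩
  rw [show log B = ℓ by rw [hB, log_exp], hℓ]
  field_simp
  ring

end SIR

theorem constant_rate_limit_general
    (β γ : ℝ) (hβ : 0 < β) (hγ : 0 < γ) (S₀ I₀ : ℝ)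
    (hS₀ : S₀ ∈ Ioo (0 : ℝ) 1) (hI₀ : I₀ ∈ Ioo (0 : ℝ) 1)
    (S I : ℝ → ℝ)
    (hS : ∀ t ∈ Ici (0 : ℝ), HasDerivWithinAt S (-(β * S t * I t)) (Ici 0) t)
    (hI : ∀ t ∈ Ici (0 : ℝ), HasDerivWithinAt I (β * S t * I t - γ * I t) (Ici 0) t)
    (hS0 : S 0 = S₀) (hI0 : I 0 = I₀) :
    ∃ Sinf : ℝ, Tendsto S atTop (𝓝 Sinf) ∧ Tendsto I atTop (𝓝 0) ∧
      Sinf ∈ Ioo 0 (γ / β) ∧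
      Sinf - γ / β * Real.log Sinf = S₀ + I₀ - γ / β * Real.log S₀ := by
  have hSc : ContinuousOn S (Ici 0) := fun t ht ↦ (hS t ht).continuousWithinAt
  have hIc : ContinuousOn I (Ici 0) := fun t ht ↦ (hI t ht).continuousWithinAt
  have hSpos : ∀ t ∈ Ici (0 : ℝ), 0 < S t := fun t ↦
    pos_of_hasDerivWithinAt_Ici_mul (c := fun t ↦ -(β * I t)) (continuousOn_const.mul hIc).neg
      (fun t ht ↦ (hS t ht).congr_deriv (by ring)) (hS0 ▸ hS₀.1)
  have hIpos : ∀ t ∈ Ici (0 : ℝ), 0 < I t := fun t ↦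
    pos_of_hasDerivWithinAt_Ici_mul (c := fun t ↦ β * S t - γ)
      ((continuousOn_const.mul hSc).sub continuousOn_const)
      (fun t ht ↦ (hI t ht).congr_deriv (by ring)) (hI0 ▸ hI₀.1)
  obtain ⟨Sinf, hSlim, hSinfS, hIlim⟩ := sir_exists_limit hβ.le hγ hS hI hSpos hIpos
  obtain ⟨hSinf_pos, hSinf_eq⟩ := sir_limit_pos_and_eq hβ.ne' hγ.ne' hSpos
    (fun t ht ↦ sir_first_integral hβ.ne' hS hI hSpos ht) hSlim hIlim
  refine ⟨Sinf, hSlim, hIlim, ⟨hSinf_pos, sir_limit_lt_threshold hβ hI hIpos hSinfS hIlim⟩, ?_⟩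
  rwa [hS0, hI0] at hSinf_eq

/-- for the SIR system with constant rates `β, γ > 0` on `[0, ∞)` with
`S(0) = S₀ ∈ (0,1)`, `I(0) = I₀ ∈ (0,1)`, `S₀ + I₀ ≤ 1`, the limit `S(∞)` exists,
`I(t) → 0`, `S(∞) ∈ (0, γ/β)`, and `S(∞) - (γ/β) log S(∞) = S₀ + I₀ - (γ/β) log S₀`. -/
theorem constant_rate_limit
    (β γ : ℝ) (hβ : 0 < β) (hγ : 0 < γ) (S₀ I₀ : ℝ)
    (hS₀ : S₀ ∈ Ioo (0 : ℝ) 1) (hI₀ : I₀ ∈ Ioo (0 : ℝ) 1) (hsum : S₀ + I₀ ≤ 1)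
    (S I : ℝ → ℝ)
    (hS : ∀ t ∈ Ici (0 : ℝ), HasDerivWithinAt S (-(β * S t * I t)) (Ici 0) t)
    (hI : ∀ t ∈ Ici (0 : ℝ), HasDerivWithinAt I (β * S t * I t - γ * I t) (Ici 0) t)
    (hS0 : S 0 = S₀) (hI0 : I 0 = I₀) :
    ∃ Sinf : ℝ, Tendsto S atTop (𝓝 Sinf) ∧ Tendsto I atTop (𝓝 0) ∧
      Sinf ∈ Ioo 0 (γ / β) ∧
      Sinf - γ / β * Real.log Sinf = S₀ + I₀ - γ / β * Real.log S₀ :=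
  constant_rate_limit_general β γ hβ hγ S₀ I₀ hS₀ hI₀ S I hS hI hS0 hI0
end
end

section
/- Suppose β_n > γ. Then there exists ε₀ > 0 such that for all ε ∈ (0, ε₀) one has Q(1 − ε, ε, T) < 0. In fact, for the quarantined solution (S, I) with S(0) = 1 − ε, I(0) = ε, one has I(t) ≤ ε · max{1, e^{(β_q − γ)T}} and S(t) ≥ (1 − ε) · exp(−β_q ε T · max{1, e^{(β_q − γ)T}}) for all t ∈ [0, T], and if ε₀ is small enough these bounds force S(t) > γ/β_n on [0,T] and hence Q(1 − ε, ε, T) < 0. -/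
/-!
Both equations are linear in the unknown being differentiated, so an integrating factor gives
`I(t) = I₀ exp ∫₀ᵗ (β_q S - γ)` and `S(t) = S₀ exp (-∫₀ᵗ β_q I)`. Hence `I > 0`, so `S` decreases
and `I(t) ≤ I₀ e^{(β_q S₀ - γ) t} ≤ I₀ M` with `M = max {1, e^{(β_q - γ) T}}`; feeding this back
gives `S(t) ≥ S₀ e^{-β_q I₀ M T}`. For `S₀ = 1 - ε`, `I₀ = ε` this is at least
`1 - ε (1 + β_q T M)`, which exceeds `γ / β_n` once `ε` is small, and then the integrand
`(γ - β_n S) / I` of `Q` is negative on `[0, T]`.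
-/

open Set Filter MeasureTheory Topology Asymptotics
open scoped Classical

noncomputable section

open Real

theorem ContinuousOn.hasDerivWithinAt_integral_Icc {E : Type*} [NormedAddCommGroup E]
    [NormedSpace ℝ E] [CompleteSpace E] {f : ℝ → E} {a b t : ℝ}
    (hf : ContinuousOn f (Icc a b)) (ht : t ∈ Icc a b) :
    HasDerivWithinAt (fun u => ∫ x in a..u, f x) (f t) (Icc a b) t := by
  have : Fact (t ∈ Icc a b) := ⟨ht⟩
  refine intervalIntegral.integral_hasDerivWithinAt_right ?_
    (hf.stronglyMeasurableAtFilter_nhdsWithin measurableSet_Icc t) (hf t ht)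
  refine (hf.mono ?_).intervalIntegrable
  rw [uIcc_of_le ht.1]
  exact Icc_subset_Icc_right ht.2

theorem eq_mul_exp_integral_of_hasDerivWithinAt {f a : ℝ → ℝ} {l u : ℝ}
    (ha : ContinuousOn a (Icc l u))
    (hf : ∀ t ∈ Icc l u, HasDerivWithinAt f (a t * f t) (Icc l u) t) :
    ∀ t ∈ Icc l u, f t = f l * exp (∫ s in l..t, a s) := by
  set A : ℝ → ℝ := fun t => ∫ s in l..t, a s
  have hderiv : ∀ t ∈ Icc l u,
      HasDerivWithinAt (fun t => f t * exp (-A t)) 0 (Icc l u) t := fun t ht =>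
    ((hf t ht).mul (ha.hasDerivWithinAt_integral_Icc ht).neg.exp).congr_deriv (by ring)
  intro t ht
  have hl : l ∈ Icc l u := ⟨le_rfl, ht.1.trans ht.2⟩
  have hconst := (convex_Icc l u).norm_image_sub_le_of_norm_hasDerivWithin_le
    (C := 0) hderiv (fun _ _ => norm_zero.le) hl ht
  have hA : A l = 0 := intervalIntegral.integral_same
  rw [zero_mul, norm_le_zero_iff, sub_eq_zero, hA, neg_zero, exp_zero, mul_one] at hconst
  rw [← hconst, mul_assoc, ← exp_add, neg_add_cancel, exp_zero, mul_one]

theorem intervalIntegral_neg_of_neg_on {f : ℝ → ℝ} {a b : ℝ}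
    (hfi : IntervalIntegrable f volume a b) (hneg : ∀ x ∈ Ioo a b, f x < 0) (hab : a < b) :
    ∫ x in a..b, f x < 0 := by
  have hpos := intervalIntegral.intervalIntegral_pos_of_pos_on (f := fun x => -f x) hfi.neg
    (fun x hx => neg_pos.2 (hneg x hx)) hab
  rw [intervalIntegral.integral_neg] at hpos
  linarith

theorem exp_mul_le_max_one_exp (c : ℝ) {t T : ℝ} (ht : t ∈ Icc 0 T) :
    exp (c * t) ≤ max 1 (exp (c * T)) := by
  rcases le_total c 0 with hc | hc
  · exact le_max_of_le_left (exp_le_one_iff.2 (mul_nonpos_of_nonpos_of_nonneg hc ht.1))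
  · exact le_max_of_le_right (exp_le_exp.2 (mul_le_mul_of_nonneg_left ht.2 hc))

theorem lt_one_sub_mul_exp_neg {r c ε : ℝ} (hr : 0 ≤ r) (hc : 0 ≤ c) (hε : 0 ≤ ε)
    (h : ε * (1 + c) < 1 - r) : r < (1 - ε) * exp (-(c * ε)) := by
  have hexp : 1 - c * ε ≤ exp (-(c * ε)) := by linarith [add_one_le_exp (-(c * ε))]
  have hε1 : 0 ≤ 1 - ε := by nlinarith
  calc r < 1 - ε * (1 + c) := by linarith
    _ ≤ (1 - ε) * (1 - c * ε) := by nlinarith [mul_nonneg hc (mul_nonneg hε hε)]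
    _ ≤ (1 - ε) * exp (-(c * ε)) := mul_le_mul_of_nonneg_left hexp hε1

structure IsSIROn (β γ T : ℝ) (S I : ℝ → ℝ) : Prop where
  hasDerivWithinAt_S : ∀ t ∈ Icc 0 T, HasDerivWithinAt S (-(β * S t * I t)) (Icc 0 T) t
  hasDerivWithinAt_I : ∀ t ∈ Icc 0 T, HasDerivWithinAt I (β * S t * I t - γ * I t) (Icc 0 T) t

namespace IsSIROn

variable {β γ T : ℝ} {S I : ℝ → ℝ}

theorem continuousOn_S (h : IsSIROn β γ T S I) : ContinuousOn S (Icc 0 T) :=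
  fun t ht => (h.hasDerivWithinAt_S t ht).continuousWithinAt

theorem continuousOn_I (h : IsSIROn β γ T S I) : ContinuousOn I (Icc 0 T) :=
  fun t ht => (h.hasDerivWithinAt_I t ht).continuousWithinAt

theorem I_eq (h : IsSIROn β γ T S I) :
    ∀ t ∈ Icc 0 T, I t = I 0 * exp (∫ s in (0 : ℝ)..t, (β * S s - γ)) :=
  eq_mul_exp_integral_of_hasDerivWithinAt
    ((continuousOn_const.mul h.continuousOn_S).sub continuousOn_const)
    fun t ht => (h.hasDerivWithinAt_I t ht).congr_deriv (by ring)

theorem S_eq (h : IsSIROn β γ T S I) :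
    ∀ t ∈ Icc 0 T, S t = S 0 * exp (-∫ s in (0 : ℝ)..t, β * I s) := by
  intro t ht
  rw [← intervalIntegral.integral_neg]
  exact eq_mul_exp_integral_of_hasDerivWithinAt (a := fun s => -(β * I s))
    (continuousOn_const.mul h.continuousOn_I).neg
    (fun t ht => (h.hasDerivWithinAt_S t ht).congr_deriv (by ring)) t ht

theorem I_pos (h : IsSIROn β γ T S I) (hI₀ : 0 < I 0) : ∀ t ∈ Icc 0 T, 0 < I t :=
  fun t ht => h.I_eq t ht ▸ mul_pos hI₀ (exp_pos _)

theorem S_le (h : IsSIROn β γ T S I) (hβ : 0 ≤ β) (hS₀ : 0 ≤ S 0) (hI₀ : 0 < I 0) :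
    ∀ t ∈ Icc 0 T, S t ≤ S 0 := by
  intro t ht
  have hint : 0 ≤ ∫ s in (0 : ℝ)..t, β * I s :=
    intervalIntegral.integral_nonneg ht.1 fun s hs =>
      mul_nonneg hβ (h.I_pos hI₀ s ⟨hs.1, hs.2.trans ht.2⟩).le
  rw [h.S_eq t ht]
  exact mul_le_of_le_one_right hS₀ (exp_le_one_iff.2 (neg_nonpos.2 hint))

theorem I_le (h : IsSIROn β γ T S I) (hβ : 0 ≤ β) (hS₀ : 0 ≤ S 0) (hI₀ : 0 < I 0) :
    ∀ t ∈ Icc 0 T, I t ≤ I 0 * exp ((β * S 0 - γ) * t) := by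
  intro t ht
  have hint : ∫ s in (0 : ℝ)..t, (β * S s - γ) ≤ (β * S 0 - γ) * t := calc
    _ ≤ ∫ _ in (0 : ℝ)..t, (β * S 0 - γ) := by
      refine intervalIntegral.integral_mono_on ht.1 ?_ intervalIntegrable_const fun s hs => ?_
      · have hc : ContinuousOn (fun s => β * S s - γ) (Icc 0 T) :=
          (continuousOn_const.mul h.continuousOn_S).sub continuousOn_const
        exact (hc.mono (Icc_subset_Icc_right ht.2)).intervalIntegrable_of_Icc ht.1
      · have hSs := h.S_le hβ hS₀ hI₀ s ⟨hs.1, hs.2.trans ht.2⟩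
        gcongr
    _ = (β * S 0 - γ) * t := by
      rw [intervalIntegral.integral_const, smul_eq_mul, sub_zero, mul_comm]
  rw [h.I_eq t ht]
  gcongr

theorem I_le_mul_max (h : IsSIROn β γ T S I) (hβ : 0 ≤ β) (hS₀ : S 0 ∈ Icc 0 1)
    (hI₀ : 0 < I 0) : ∀ t ∈ Icc 0 T, I t ≤ I 0 * max 1 (exp ((β - γ) * T)) := fun t ht => calc
  I t ≤ I 0 * exp ((β * S 0 - γ) * t) := h.I_le hβ hS₀.1 hI₀ t ht
  _ ≤ I 0 * exp ((β - γ) * t) := by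
    gcongr
    · exact ht.1
    · exact mul_le_of_le_one_right hβ hS₀.2
  _ ≤ I 0 * max 1 (exp ((β - γ) * T)) := by gcongr; exact exp_mul_le_max_one_exp _ ht

theorem le_S (h : IsSIROn β γ T S I) (hβ : 0 ≤ β) (hS₀ : 0 ≤ S 0) {B : ℝ}
    (hB : ∀ t ∈ Icc 0 T, I t ≤ B) (hB₀ : 0 ≤ B) :
    ∀ t ∈ Icc 0 T, S 0 * exp (-(β * B * T)) ≤ S t := by
  intro t ht
  have hint : ∫ s in (0 : ℝ)..t, β * I s ≤ β * B * T := calc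
    _ ≤ ∫ _ in (0 : ℝ)..t, β * B := by
      refine intervalIntegral.integral_mono_on ht.1 ?_ intervalIntegrable_const fun s hs => ?_
      · have hc : ContinuousOn (fun s => β * I s) (Icc 0 T) :=
          continuousOn_const.mul h.continuousOn_I
        exact (hc.mono (Icc_subset_Icc_right ht.2)).intervalIntegrable_of_Icc ht.1
      · exact mul_le_mul_of_nonneg_left (hB s ⟨hs.1, hs.2.trans ht.2⟩) hβ
    _ = β * B * t := by rw [intervalIntegral.integral_const, smul_eq_mul, sub_zero, mul_comm]
    _ ≤ β * B * T := mul_le_mul_of_nonneg_left ht.2 (mul_nonneg hβ hB₀)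
  rw [h.S_eq t ht]
  gcongr

theorem integral_div_I_neg (h : IsSIROn β γ T S I) (hI₀ : 0 < I 0) (hT : 0 < T) {a b : ℝ}
    (hS : ∀ t ∈ Icc 0 T, a < b * S t) : ∫ t in (0 : ℝ)..T, (a - b * S t) / I t < 0 := by
  refine intervalIntegral_neg_of_neg_on ?_ (fun t ht => ?_) hT
  · refine ContinuousOn.intervalIntegrable ?_
    rw [uIcc_of_le hT.le]
    exact (continuousOn_const.sub (continuousOn_const.mul h.continuousOn_S)).div h.continuousOn_I
      fun t ht => (h.I_pos hI₀ t ht).ne'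
  · have ht' := Ioo_subset_Icc_self ht
    exact div_neg_of_neg_of_pos (sub_neg.2 (hS t ht')) (h.I_pos hI₀ t ht')

end IsSIROn

theorem Q_neg_for_small_initial_infection_general
    (βq βn γ T : ℝ) (hβq : 0 < βq) (hγ : 0 < γ) (hT : 0 < T)
    (hsup : γ < βn) :
    ∃ ε₀ > (0 : ℝ), ∀ ε ∈ Ioo (0 : ℝ) ε₀,
      ∀ S I : ℝ → ℝ,
        (∀ t ∈ Icc (0 : ℝ) T, HasDerivWithinAt S (-(βq * S t * I t)) (Icc 0 T) t) →
        (∀ t ∈ Icc (0 : ℝ) T, HasDerivWithinAt I (βq * S t * I t - γ * I t) (Icc 0 T) t) →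
        S 0 = 1 - ε → I 0 = ε →
        (∀ t ∈ Icc (0 : ℝ) T,
          I t ≤ ε * max 1 (Real.exp ((βq - γ) * T)) ∧
          (1 - ε) * Real.exp (-(βq * ε * T * max 1 (Real.exp ((βq - γ) * T)))) ≤ S t ∧
          γ / βn < S t) ∧
        (∫ t in (0 : ℝ)..T, (γ - βn * S t) / I t) < 0 := by
  set M := max 1 (exp ((βq - γ) * T))
  have hβn : 0 < βn := hγ.trans hsup
  have hc : 0 ≤ βq * T * M := by positivity
  refine ⟨(1 - γ / βn) / (1 + βq * T * M),
    div_pos (sub_pos.2 ((div_lt_one hβn).2 hsup)) (by positivity), ?_⟩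
  rintro ε ⟨hε, hεε₀⟩ S I hS hI hS₀ hI₀
  have h : IsSIROn βq γ T S I := ⟨hS, hI⟩
  have hsmall : ε * (1 + βq * T * M) < 1 - γ / βn := (lt_div_iff₀ (by positivity)).1 hεε₀
  have hS₀_mem : S 0 ∈ Icc 0 1 := by
    rw [hS₀]; constructor <;> nlinarith [div_pos hγ hβn]
  have hI₀_pos : 0 < I 0 := hI₀ ▸ hε
  have hI_le := h.I_le_mul_max hβq.le hS₀_mem hI₀_pos
  have hS_ge : ∀ t ∈ Icc 0 T, (1 - ε) * exp (-(βq * ε * T * M)) ≤ S t := fun t ht => by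
    have := h.le_S hβq.le hS₀_mem.1 hI_le (mul_nonneg hI₀_pos.le (by positivity)) t ht
    rwa [hS₀, hI₀, show βq * (ε * M) * T = βq * ε * T * M by ring] at this
  have hS_gt : ∀ t ∈ Icc 0 T, γ / βn < S t := fun t ht => by
    refine (lt_one_sub_mul_exp_neg (div_pos hγ hβn).le hc hε.le hsmall).trans_le ?_
    rw [show βq * T * M * ε = βq * ε * T * M by ring]
    exact hS_ge t ht
  refine ⟨fun t ht => ⟨hI₀ ▸ hI_le t ht, hS_ge t ht, hS_gt t ht⟩, ?_⟩
  exact h.integral_div_I_neg hI₀_pos hT fun t ht => (div_lt_iff₀' hβn).1 (hS_gt t ht)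

/-- if `βₙ > γ` there is `ε₀ > 0` such that for every `ε ∈ (0, ε₀)`,
the quarantined solution with `S(0) = 1 - ε`, `I(0) = ε` satisfies the stated bounds
on `[0, T]`, in particular `S > γ/βₙ` there, and hence `Q(1 - ε, ε, T) < 0`. -/
theorem Q_neg_for_small_initial_infection
    (βq βn γ T : ℝ) (hβq : 0 < βq) (hβ : βq < βn) (hγ : 0 < γ) (hT : 0 < T)
    (hsup : γ < βn) :
    ∃ ε₀ > (0 : ℝ), ∀ ε ∈ Ioo (0 : ℝ) ε₀,
      ∀ S I : ℝ → ℝ,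
        (∀ t ∈ Icc (0 : ℝ) T, HasDerivWithinAt S (-(βq * S t * I t)) (Icc 0 T) t) →
        (∀ t ∈ Icc (0 : ℝ) T, HasDerivWithinAt I (βq * S t * I t - γ * I t) (Icc 0 T) t) →
        S 0 = 1 - ε → I 0 = ε →
        (∀ t ∈ Icc (0 : ℝ) T,
          I t ≤ ε * max 1 (Real.exp ((βq - γ) * T)) ∧
          (1 - ε) * Real.exp (-(βq * ε * T * max 1 (Real.exp ((βq - γ) * T)))) ≤ S t ∧
          γ / βn < S t) ∧
        (∫ t in (0 : ℝ)..T, (γ - βn * S t) / I t) < 0 :=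
  Q_neg_for_small_initial_infection_general βq βn γ T hβq hγ hT hsup
end
end
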